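/- Let p(x,y,z) = 2x(1 - 7y + z) + 4y - 7y² + 4yz + 6z + 3z², and for odd n ≥ 9 define f_n : {-1,1}^n → {-1,1} by f_n(x) = sgn( p( x_1, Σ_{i=2}^{n-2} x_i, x_{n-1} + x_n ) ). Then I[f_n] / I_GL(n,2) = 1 + 7/(32n) - 3/(32(n-2)) + 3/(16n²), where I_GL(n,2) = n · 2^{1-n} · C(n, (n-1)/2) is the Gotsman–Linial bound for degree-2 PTFs on an odd number n of variables. -/

import Mathlib

open Finset
open scoped Classical

noncomputable section

/-- The Boolean cube `{-1,1}^V` as a finset of functions `V → ℤ`. -/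
def cube (V : Type*) [Fintype V] [DecidableEq V] : Finset (V → ℤ) :=
  Fintype.piFinset fun _ => ({-1, 1} : Finset ℤ)

/-- Negate the `i`-th coordinate. -/
def flipAt {V : Type*} [DecidableEq V] (x : V → ℤ) (i : V) : V → ℤ :=
  Function.update x i (-(x i))

/-- Influence of coordinate `i` on `f`: the probability over a uniform point of the cube
that flipping coordinate `i` changes the value of `f`. -/
def coordInf {V : Type*} [Fintype V] [DecidableEq V] {α : Type*} (f : (V → ℤ) → α) (i : V) : ℝ :=
  (∑ x ∈ cube V, if f x ≠ f (flipAt x i) then (1 : ℝ) else 0) / (cube V).card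

/-- Total influence of `f`. -/
def totalInf {V : Type*} [Fintype V] [DecidableEq V] {α : Type*} (f : (V → ℤ) → α) : ℝ :=
  ∑ i : V, coordInf f i

/-- Sign function, with `sgn 0 = 0`. -/
def sgn (t : ℝ) : ℤ := if 0 < t then 1 else if t < 0 then -1 else 0

/-- A quadratic multilinear polynomial `∑_{i<j} a_{ij} x_i x_j + ∑_i b_i x_i + c`. -/
def quadPoly {V : Type*} [Fintype V] [LinearOrder V] (a : V → V → ℝ) (b : V → ℝ) (c : ℝ)
    (x : V → ℤ) : ℝ :=
  (∑ i : V, ∑ j : V, if i < j then a i j * x i * x j else 0) + (∑ i : V, b i * x i) + c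

/-- `f` is a QTF supported on the graph `G`: it has a quadratic representation whose
cross terms only involve edges of `G`, and whose polynomial is nonvanishing on the cube. -/
def IsQTFSupportedOn {V : Type*} [Fintype V] [LinearOrder V] (G : SimpleGraph V)
    (f : (V → ℤ) → ℤ) : Prop :=
  ∃ a b c, (∀ i j : V, i < j → a i j ≠ 0 → G.Adj i j) ∧
    (∀ x ∈ cube V, quadPoly a b c x ≠ 0) ∧
    (∀ x ∈ cube V, f x = sgn (quadPoly a b c x))

/-- The counterexample polynomial `p(x,y,z) = 2x(1-7y+z) + 4y - 7y² + 4yz + 6z + 3z²`. -/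
def pGL (x y z : ℝ) : ℝ :=
  2 * x * (1 - 7 * y + z) + 4 * y - 7 * y ^ 2 + 4 * y * z + 6 * z + 3 * z ^ 2

/-- The argument `p(x_1, Σ_{i=2}^{n-2} x_i, x_{n-1} + x_n)` of the counterexample QTF,
with 1-based coordinates `x_1, …, x_n` encoded by indices `0, …, n-1` of `Fin n`. -/
def argGL {n : ℕ} (hn : 5 ≤ n) (x : Fin n → ℤ) : ℝ :=
  pGL ((x ⟨0, by omega⟩ : ℤ) : ℝ)
    (∑ i ∈ Finset.univ.filter (fun i : Fin n => 1 ≤ i.val ∧ i.val ≤ n - 3), ((x i : ℤ) : ℝ))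
    (((x ⟨n - 2, by omega⟩ : ℤ) : ℝ) + ((x ⟨n - 1, by omega⟩ : ℤ) : ℝ))

/-! The value of `f_n` depends only on `x_1`, on the sum `y` of the `n - 3` middle coordinates and
on `x_{n-1} + x_n`, so its sensitivity at `x` is an explicit function (`flipCount`) of `x_1`,
`x_{n-1}`, `x_n` and the number `k` of middle coordinates equal to `1`; summing over the cube gives
`2^n I[f_n] = ∑_{a,s,t = ±1} ∑_k C(n-3, k) · flipCount`. Since `p(x, y, z) < 0` once `y ≤ -4` or
`y ≥ 6` (for `|x| ≤ 1`, `|z| ≤ 2`), only the six values of `k` with `-4 ≤ y ≤ 6` contribute, and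
the resulting combination of six near-central binomial coefficients, divided by `C(n, (n-1)/2)`,
is a rational function of `n`. -/

section

variable {V : Type*} [DecidableEq V]

theorem flipAt_apply_of_ne (x : V → ℤ) {i j : V} (h : j ≠ i) : flipAt x i j = x j :=
  Function.update_of_ne h _ _

theorem sum_flipAt_of_mem (x : V → ℤ) {M : Finset V} {i : V} (hi : i ∈ M) :
    ∑ j ∈ M, flipAt x i j = ∑ j ∈ M, x j - 2 * x i := by
  rw [flipAt, sum_update_of_mem hi, sum_eq_add_sum_sdiff_singleton_of_mem hi x]
  ring

theorem sum_powerset_eq_sum_powerset_sdiff_sum_choose {β : Type*} [AddCommMonoid β]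
    {s M : Finset V} (hM : M ⊆ s) (g : Finset V → ℕ → β) :
    ∑ A ∈ s.powerset, g (A \ M) #(A ∩ M) =
      ∑ C ∈ (s \ M).powerset, ∑ k ∈ range (#M + 1), (#M).choose k • g C k := by
  calc ∑ A ∈ s.powerset, g (A \ M) #(A ∩ M)
      = ∑ p ∈ (s \ M).powerset ×ˢ M.powerset, g p.1 #p.2 := by
        refine sum_nbij' (fun A => (A \ M, A ∩ M)) (fun p => p.1 ∪ p.2) ?_ ?_ ?_ ?_
          (fun _ _ => rfl)
        · intro A hA
          simp only [mem_product, mem_powerset] at hA ⊢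
          exact ⟨sdiff_subset_sdiff hA le_rfl, inter_subset_right⟩
        · intro p hp
          simp only [mem_product, mem_powerset] at hp ⊢
          exact union_subset (hp.1.trans sdiff_subset) (hp.2.trans hM)
        · intro A _
          exact sdiff_union_inter A M
        · intro p hp
          simp only [mem_product, mem_powerset] at hp
          have hC : ∀ i ∈ p.1, i ∉ M := fun i hi => (mem_sdiff.1 (hp.1 hi)).2
          ext i <;> simp only [mem_sdiff, mem_union, mem_inter]
          · exact ⟨fun h => h.1.resolve_right fun h' => h.2 (hp.2 h'),
              fun h => ⟨Or.inl h, hC i h⟩⟩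
          · exact ⟨fun h => h.1.resolve_left fun h' => hC i h' h.2,
              fun h => ⟨Or.inr h, hp.2 h⟩⟩
    _ = ∑ C ∈ (s \ M).powerset, ∑ k ∈ range (#M + 1), (#M).choose k • g C k := by
        rw [sum_product]
        exact sum_congr rfl fun C _ => sum_powerset_apply_card (g C)

end

section Cube

variable {V : Type*} [Fintype V] [DecidableEq V]

theorem mem_cube {x : V → ℤ} : x ∈ cube V ↔ ∀ i, x i = -1 ∨ x i = 1 := by
  simp [cube]

theorem card_cube : #(cube V) = 2 ^ Fintype.card V := by
  simp [cube]

theorem flipAt_mem_cube {x : V → ℤ} (hx : x ∈ cube V) (i : V) : flipAt x i ∈ cube V := by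
  rw [mem_cube] at hx ⊢
  intro j
  rcases eq_or_ne j i with rfl | hji
  · rcases hx j with h | h <;> simp [flipAt, h]
  · simpa [flipAt, hji] using hx j

theorem sum_eq_two_mul_card_filter_sub {x : V → ℤ} (hx : x ∈ cube V) (M : Finset V) :
    ∑ i ∈ M, x i = 2 * #{i ∈ M | x i = 1} - #M := by
  have hneg : ∀ i ∈ M.filter (¬ x · = 1), x i = -1 := fun i hi =>
    (mem_cube.1 hx i).resolve_right (mem_filter.1 hi).2
  rw [← sum_filter_add_sum_filter_not M (x · = 1), sum_congr rfl fun i hi => (mem_filter.1 hi).2,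
    sum_congr rfl hneg, ← card_filter_add_card_filter_not (s := M) (x · = 1)]
  simp
  ring

theorem sum_comp_sum_flipAt {β : Type*} [CommRing β] {x : V → ℤ} (hx : x ∈ cube V) (M : Finset V)
    (φ : ℤ → β) :
    ∑ i ∈ M, φ (∑ j ∈ M, flipAt x i j) =
      #{i ∈ M | x i = 1} * φ (∑ j ∈ M, x j - 2) +
        ((#M : β) - #{i ∈ M | x i = 1}) * φ (∑ j ∈ M, x j + 2) := by
  have hup : ∀ i ∈ M.filter (x · = 1), φ (∑ j ∈ M, flipAt x i j) = φ (∑ j ∈ M, x j - 2) :=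
    fun i hi => by rw [sum_flipAt_of_mem x (mem_filter.1 hi).1, (mem_filter.1 hi).2, mul_one]
  have hdown : ∀ i ∈ M.filter (¬ x · = 1),
      φ (∑ j ∈ M, flipAt x i j) = φ (∑ j ∈ M, x j + 2) := fun i hi => by
    rw [sum_flipAt_of_mem x (mem_filter.1 hi).1,
      (mem_cube.1 hx i).resolve_right (mem_filter.1 hi).2, mul_neg_one, sub_neg_eq_add]
  rw [← sum_filter_add_sum_filter_not M (x · = 1), sum_congr rfl hup, sum_congr rfl hdown,
    sum_const, sum_const, nsmul_eq_mul, nsmul_eq_mul,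
    ← card_filter_add_card_filter_not (s := M) (x · = 1)]
  push_cast
  ring

def sensitivity {α : Type*} [DecidableEq α] (f : (V → ℤ) → α) (x : V → ℤ) : ℕ :=
  #{i | f x ≠ f (flipAt x i)}

theorem totalInf_mul_two_pow {α : Type*} [DecidableEq α] (f : (V → ℤ) → α) :
    totalInf f * 2 ^ Fintype.card V = ∑ x ∈ cube V, (sensitivity f x : ℝ) := by
  simp only [totalInf, coordInf, sensitivity, natCast_card_filter, card_cube]
  rw [sum_comm, ← sum_div]
  push_cast
  rw [div_mul_cancel₀ _ (by positivity)]
  congr! 3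

theorem totalInf_congr {α : Type*} {f g : (V → ℤ) → α} (h : ∀ x ∈ cube V, f x = g x) :
    totalInf f = totalInf g := by
  unfold totalInf coordInf
  refine sum_congr rfl fun i _ => ?_
  congr 1
  exact sum_congr rfl fun x hx => by rw [h x hx, h _ (flipAt_mem_cube hx i)]

def signVec (A : Finset V) : V → ℤ := fun i => if i ∈ A then 1 else -1

theorem signVec_filter_eq_one {x : V → ℤ} (hx : x ∈ cube V) :
    signVec ({i | x i = 1} : Finset V) = x := by
  funext i
  rcases mem_cube.1 hx i with h | h <;> simp [signVec, h]

theorem sum_cube_eq_sum_powerset {β : Type*} [AddCommMonoid β] (F : (V → ℤ) → β) :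
    ∑ x ∈ cube V, F x = ∑ A ∈ (univ : Finset V).powerset, F (signVec A) := by
  refine sum_nbij' (fun x => ({i | x i = 1} : Finset V)) signVec (by simp) (fun A _ => ?_)
    (fun x hx => signVec_filter_eq_one hx) (fun A _ => ?_)
    (fun x hx => by rw [signVec_filter_eq_one hx])
  · simp [mem_cube, signVec, em']
  · ext i; simp [signVec]

theorem sum_cube_eq_sum_sum_choose {β : Type*} [AddCommMonoid β] {i₀ i₁ i₂ : V} {M : Finset V}
    (hcompl : univ \ M = {i₀, i₁, i₂}) (h₀₁ : i₀ ≠ i₁) (h₀₂ : i₀ ≠ i₂) (h₁₂ : i₁ ≠ i₂)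
    (F : ℤ → ℤ → ℤ → ℕ → β) :
    ∑ x ∈ cube V, F (x i₀) (x i₁) (x i₂) #{i ∈ M | x i = 1} =
      ∑ a ∈ {-1, 1}, ∑ b ∈ {-1, 1}, ∑ c ∈ {-1, 1}, ∑ k ∈ range (#M + 1),
        (#M).choose k • F a b c k := by
  have hout : ∀ i ∈ ({i₀, i₁, i₂} : Finset V), i ∉ M := fun i hi =>
    (mem_sdiff.1 (hcompl ▸ hi)).2
  have hsdiff : ∀ (A : Finset V), ∀ i ∉ M, signVec (A \ M) i = signVec A i := fun A i hi => by
    simp [signVec, hi]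
  have hcount : ∀ A : Finset V, #{i ∈ M | signVec A i = 1} = #(A ∩ M) := fun A => by
    simp [signVec, filter_mem_eq_inter, inter_comm]
  let g : Finset V → ℕ → β := fun C k => F (signVec C i₀) (signVec C i₁) (signVec C i₂) k
  calc ∑ x ∈ cube V, F (x i₀) (x i₁) (x i₂) #{i ∈ M | x i = 1}
      = ∑ A ∈ (univ : Finset V).powerset, g (A \ M) #(A ∩ M) := by
        rw [sum_cube_eq_sum_powerset]
        refine sum_congr rfl fun A _ => ?_
        simp only [g, hcount, hsdiff A i₀ (hout _ (by simp)), hsdiff A i₁ (hout _ (by simp)),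
          hsdiff A i₂ (hout _ (by simp))]
    _ = _ := by
        rw [sum_powerset_eq_sum_powerset_sdiff_sum_choose (subset_univ M), hcompl, ← insert_empty]
        simp only [sum_powerset_insert (show i₀ ∉ insert i₁ (insert i₂ ∅) by simp [h₀₁, h₀₂]),
          sum_powerset_insert (show i₁ ∉ insert i₂ ∅ by simp [h₁₂]),
          sum_powerset_insert (notMem_empty i₂), powerset_empty, sum_singleton]
        simp [g, signVec, h₀₁, h₀₂, h₁₂, h₀₁.symm, h₀₂.symm, h₁₂.symm]

end Cube

theorem sgn_of_neg {t : ℝ} (ht : t < 0) : sgn t = -1 := by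
  simp [sgn, ht, ht.not_gt]

theorem pGL_neg {x y z : ℝ} (hx : |x| ≤ 1) (hz : |z| ≤ 2) (hy : y ≤ -4 ∨ 6 ≤ y) :
    pGL x y z < 0 := by
  rw [abs_le] at hx hz
  unfold pGL
  rcases hy with hy | hy
  · nlinarith [mul_nonneg (sub_nonneg.2 hx.2) (neg_nonneg.2 (by linarith : y + 4 ≤ 0)),
      mul_nonneg (sub_nonneg.2 hz.2) (neg_nonneg.2 (by linarith : y + 4 ≤ 0)),
      mul_nonneg (by linarith : 0 ≤ x + 1) (by linarith : 0 ≤ z + 2),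
      mul_nonneg (by linarith : 0 ≤ 1 - x) (by linarith : 0 ≤ 2 - z)]
  · nlinarith [mul_nonneg (by linarith : 0 ≤ x + 1) (by linarith : 0 ≤ y - 6),
      mul_nonneg (by linarith : 0 ≤ 2 - z) (by linarith : 0 ≤ y - 6),
      mul_nonneg (by linarith : 0 ≤ x + 1) (by linarith : 0 ≤ z + 2),
      mul_nonneg (by linarith : 0 ≤ 1 - x) (by linarith : 0 ≤ 2 - z)]

def sgnGL (a y z : ℤ) : ℤ := sgn (pGL a y z)

theorem sgnGL_eq_neg_one {a y z : ℤ} (ha : |a| ≤ 1) (hz : |z| ≤ 2) (hy : y ≤ -4 ∨ 6 ≤ y) :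
    sgnGL a y z = -1 :=
  sgn_of_neg <| pGL_neg (by exact_mod_cast ha) (by exact_mod_cast hz) (by exact_mod_cast hy)

/-- The sensitivity of `x ↦ sgnGL x₀ (∑ᵢ∈M xᵢ) (x₁ + x₂)` at a point with `x₀ = a`, `x₁ = s`,
`x₂ = t` and `∑ᵢ∈M xᵢ = y`, `up` (resp. `down`) coordinates in `M` being `1` (resp. `-1`). -/
def flipCount (a s t y : ℤ) (up down : ℝ) : ℝ :=
  (if sgnGL a y (s + t) ≠ sgnGL (-a) y (s + t) then 1 else 0) +
    (if sgnGL a y (s + t) ≠ sgnGL a y (-s + t) then 1 else 0) +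
    (if sgnGL a y (s + t) ≠ sgnGL a y (s - t) then 1 else 0) +
    up * (if sgnGL a y (s + t) ≠ sgnGL a (y - 2) (s + t) then 1 else 0) +
    down * (if sgnGL a y (s + t) ≠ sgnGL a (y + 2) (s + t) then 1 else 0)

theorem flipCount_eq_zero {a s t y : ℤ} (ha : a = -1 ∨ a = 1) (hs : s = -1 ∨ s = 1)
    (ht : t = -1 ∨ t = 1) (hy : y ≤ -6 ∨ 8 ≤ y) (up down : ℝ) :
    flipCount a s t y up down = 0 := by
  have hy₀ : y ≤ -4 ∨ 6 ≤ y := by omega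
  have hy₁ : y - 2 ≤ -4 ∨ 6 ≤ y - 2 := by omega
  have hy₂ : y + 2 ≤ -4 ∨ 6 ≤ y + 2 := by omega
  have hA : |a| ≤ 1 ∧ |-a| ≤ 1 := by rcases ha with rfl | rfl <;> norm_num
  have hZ : |s + t| ≤ 2 ∧ |-s + t| ≤ 2 ∧ |s - t| ≤ 2 := by
    rcases hs with rfl | rfl <;> rcases ht with rfl | rfl <;> norm_num
  simp [flipCount, sgnGL_eq_neg_one hA.1 hZ.1 hy₀, sgnGL_eq_neg_one hA.2 hZ.1 hy₀,
    sgnGL_eq_neg_one hA.1 hZ.2.1 hy₀, sgnGL_eq_neg_one hA.1 hZ.2.2 hy₀,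
    sgnGL_eq_neg_one hA.1 hZ.1 hy₁, sgnGL_eq_neg_one hA.1 hZ.1 hy₂]

theorem sensitivity_eq_flipCount {V : Type*} [Fintype V] [DecidableEq V] {i₀ i₁ i₂ : V}
    {M : Finset V} (hcompl : univ \ M = {i₀, i₁, i₂}) (h₀₁ : i₀ ≠ i₁) (h₀₂ : i₀ ≠ i₂)
    (h₁₂ : i₁ ≠ i₂) {x : V → ℤ} (hx : x ∈ cube V) :
    (sensitivity (fun x => sgnGL (x i₀) (∑ i ∈ M, x i) (x i₁ + x i₂)) x : ℝ) =
      flipCount (x i₀) (x i₁) (x i₂) (2 * #{i ∈ M | x i = 1} - #M) #{i ∈ M | x i = 1}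
        ((#M : ℝ) - #{i ∈ M | x i = 1}) := by
  have hout : ∀ i ∈ ({i₀, i₁, i₂} : Finset V), i ∉ M := fun i hi =>
    (mem_sdiff.1 (hcompl ▸ hi)).2
  have h₀ := hout i₀ (by simp)
  have h₁ := hout i₁ (by simp)
  have h₂ := hout i₂ (by simp)
  set σ := fun y => if sgnGL (x i₀) (∑ i ∈ M, x i) (x i₁ + x i₂) ≠ sgnGL (x i₀) y (x i₁ + x i₂)
    then (1 : ℝ) else 0 with hσ
  have hmiddle : ∑ i ∈ M, (if sgnGL (x i₀) (∑ i ∈ M, x i) (x i₁ + x i₂) ≠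
      sgnGL (flipAt x i i₀) (∑ j ∈ M, flipAt x i j) (flipAt x i i₁ + flipAt x i i₂)
      then (1 : ℝ) else 0) = ∑ i ∈ M, σ (∑ j ∈ M, flipAt x i j) :=
    sum_congr rfl fun i hi => by
      rw [flipAt_apply_of_ne x (ne_of_mem_of_not_mem hi h₀).symm,
        flipAt_apply_of_ne x (ne_of_mem_of_not_mem hi h₁).symm,
        flipAt_apply_of_ne x (ne_of_mem_of_not_mem hi h₂).symm]
  rw [sensitivity, natCast_card_filter, ← sum_sdiff (subset_univ M), hcompl,
    sum_insert (by simp [h₀₁, h₀₂]), sum_insert (by simp [h₁₂]), sum_singleton, hmiddle,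
    sum_comp_sum_flipAt hx M σ, ← sum_eq_two_mul_card_filter_sub hx M]
  simp only [flipAt, Function.update_self, Function.update_of_ne h₀₁.symm,
    Function.update_of_ne h₀₂.symm, Function.update_of_ne h₁₂.symm, Function.update_of_ne h₀₁,
    Function.update_of_ne h₀₂, Function.update_of_ne h₁₂, sum_update_of_notMem h₀,
    sum_update_of_notMem h₁, sum_update_of_notMem h₂, ← sub_eq_add_neg, flipCount, hσ]
  ring

section Counterexample

variable {n : ℕ}

def midBlock (n : ℕ) : Finset (Fin n) :=
  Finset.univ.filter (fun i : Fin n => 1 ≤ i.val ∧ i.val ≤ n - 3)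

theorem univ_sdiff_midBlock (hn : 5 ≤ n) :
    univ \ midBlock n = {⟨0, by omega⟩, ⟨n - 2, by omega⟩, ⟨n - 1, by omega⟩} := by
  ext i
  simp only [midBlock, mem_sdiff, mem_univ, mem_filter, true_and, mem_insert, mem_singleton,
    Fin.ext_iff]
  omega

theorem card_midBlock (hn : 5 ≤ n) : #(midBlock n) = n - 3 := by
  have h := card_sdiff_add_card_eq_card (subset_univ (midBlock n))
  rw [univ_sdiff_midBlock hn, card_univ, Fintype.card_fin, card_insert_of_notMem
    (by simp [Fin.ext_iff]; omega), card_pair (by simp [Fin.ext_iff]; omega)] at h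
  omega

theorem sgn_argGL (hn : 5 ≤ n) (x : Fin n → ℤ) :
    sgn (argGL hn x) = sgnGL (x ⟨0, by omega⟩) (∑ i ∈ midBlock n, x i)
      (x ⟨n - 2, by omega⟩ + x ⟨n - 1, by omega⟩) := by
  simp [sgnGL, argGL, midBlock]

theorem totalInf_sgn_argGL_mul_two_pow (hn : 5 ≤ n) :
    totalInf (fun x => sgn (argGL hn x)) * 2 ^ Fintype.card (Fin n) =
      ∑ a ∈ {-1, 1}, ∑ s ∈ {-1, 1}, ∑ t ∈ {-1, 1}, ∑ k ∈ range (n - 3 + 1),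
        ((n - 3).choose k : ℝ) * flipCount a s t (2 * k - (n - 3 : ℕ)) k ((n - 3 : ℕ) - k) := by
  have h₀₁ : (⟨0, by omega⟩ : Fin n) ≠ ⟨n - 2, by omega⟩ := by simp [Fin.ext_iff]; omega
  have h₀₂ : (⟨0, by omega⟩ : Fin n) ≠ ⟨n - 1, by omega⟩ := by simp [Fin.ext_iff]; omega
  have h₁₂ : (⟨n - 2, by omega⟩ : Fin n) ≠ ⟨n - 1, by omega⟩ := by simp [Fin.ext_iff]; omega
  rw [funext (sgn_argGL hn), totalInf_mul_two_pow,
    sum_congr rfl fun x hx => sensitivity_eq_flipCount (univ_sdiff_midBlock hn) h₀₁ h₀₂ h₁₂ hx,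
    card_midBlock hn, sum_cube_eq_sum_sum_choose (univ_sdiff_midBlock hn) h₀₁ h₀₂ h₁₂
      (fun a s t k => flipCount a s t (2 * k - (n - 3 : ℕ)) k ((n - 3 : ℕ) - k)),
    card_midBlock hn]
  simp only [nsmul_eq_mul]

end Counterexample

theorem sum_choose_mul_flipCount_eq_window (m : ℕ) {a s t : ℤ} (ha : a = -1 ∨ a = 1)
    (hs : s = -1 ∨ s = 1) (ht : t = -1 ∨ t = 1) :
    ∑ k ∈ range (2 * m + 6 + 1), ((2 * m + 6).choose k : ℝ) *
        flipCount a s t (2 * k - (2 * m + 6 : ℕ)) k ((2 * m + 6 : ℕ) - k) =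
      ∑ e ∈ range 6, ((2 * m + 6).choose (m + 1 + e) : ℝ) *
        flipCount a s t (2 * e - 4) (m + 1 + e) (m + 5 - e) := by
  rw [← sum_subset (s₁ := Ico (m + 1) (m + 7)) (fun k hk => by simp at hk ⊢; omega)
    fun k _ hk => by rw [flipCount_eq_zero ha hs ht (by simp at hk; omega), mul_zero],
    sum_Ico_eq_sum_range, show m + 7 - (m + 1) = 6 by omega]
  refine sum_congr rfl fun e _ => ?_
  congr 2 <;> push_cast <;> ring

theorem sum_choose_mul_flipCount (m : ℕ) :
    ∑ a ∈ ({-1, 1} : Finset ℤ), ∑ s ∈ ({-1, 1} : Finset ℤ), ∑ t ∈ ({-1, 1} : Finset ℤ),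
      ∑ k ∈ range (2 * m + 6 + 1), ((2 * m + 6).choose k : ℝ) *
        flipCount a s t (2 * k - (2 * m + 6 : ℕ)) k ((2 * m + 6 : ℕ) - k) =
      (2 * m + 6).choose (m + 1) * (2 * m + 10) + (2 * m + 6).choose (m + 2) * (7 * m + 36) +
        (2 * m + 6).choose (m + 3) * (11 * m + 51) + (2 * m + 6).choose (m + 4) * (8 * m + 38) +
        (2 * m + 6).choose (m + 5) * (3 * m + 17) + (2 * m + 6).choose (m + 6) * (m + 6) := by
  have hpm : ∀ a ∈ ({-1, 1} : Finset ℤ), a = -1 ∨ a = 1 := by simp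
  rw [sum_congr rfl fun a ha => sum_congr rfl fun s hs => sum_congr rfl fun t ht =>
    sum_choose_mul_flipCount_eq_window m (hpm a ha) (hpm s hs) (hpm t ht)]
  simp only [sum_range_succ, sum_range_zero, sum_pair (show (-1 : ℤ) ≠ 1 by norm_num)]
  norm_num [flipCount, sgnGL, pGL, sgn]
  ring

theorem cast_choose_succ_right {N k : ℕ} (h : k ≤ N) :
    (N.choose (k + 1) : ℝ) = N.choose k * ((N : ℝ) - k) / (k + 1) := by
  rw [eq_div_iff (by positivity), ← Nat.cast_sub h]
  exact_mod_cast Nat.choose_succ_right_eq N k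

theorem cast_choose_succ_succ (N k : ℕ) :
    ((N + 1).choose (k + 1) : ℝ) = (N + 1) * N.choose k / (k + 1) := by
  rw [eq_div_iff (by positivity)]
  exact_mod_cast (Nat.add_one_mul_choose_eq N k).symm

theorem window_sum_div_bound_eq (m : ℕ) :
    ((2 * m + 6).choose (m + 1) * (2 * m + 10) + (2 * m + 6).choose (m + 2) * (7 * m + 36) +
        (2 * m + 6).choose (m + 3) * (11 * m + 51) + (2 * m + 6).choose (m + 4) * (8 * m + 38) +
        (2 * m + 6).choose (m + 5) * (3 * m + 17) + (2 * m + 6).choose (m + 6) * (m + 6) : ℝ) /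
      ((2 * m + 9) * 2 * (2 * m + 9).choose (m + 4)) =
      1 + 7 / (32 * (2 * m + 9)) - 3 / (32 * (2 * m + 9 - 2)) + 3 / (16 * (2 * m + 9) ^ 2) := by
  have c₂ := cast_choose_succ_right (N := 2 * m + 6) (k := m + 1) (by omega)
  have c₃ := cast_choose_succ_right (N := 2 * m + 6) (k := m + 2) (by omega)
  have c₄ := cast_choose_succ_right (N := 2 * m + 6) (k := m + 3) (by omega)
  have c₅ := cast_choose_succ_right (N := 2 * m + 6) (k := m + 4) (by omega)
  have c₆ := cast_choose_succ_right (N := 2 * m + 6) (k := m + 5) (by omega)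
  have d₁ := cast_choose_succ_succ (2 * m + 6) (m + 1)
  have d₂ := cast_choose_succ_succ (2 * m + 7) (m + 2)
  have d₃ := cast_choose_succ_succ (2 * m + 8) (m + 3)
  push_cast at c₂ c₃ c₄ c₅ c₆ d₁ d₂ d₃
  rw [c₆, c₅, c₄, c₃, c₂, d₃, d₂, d₁, show (2 * m + 9 - 2 : ℝ) = 2 * m + 7 by ring]
  have hc : (0 : ℝ) < (2 * m + 6).choose (m + 1) := by exact_mod_cast Nat.choose_pos (by omega)
  field_simp
  ring

/-- For odd `n ≥ 9`, the ratio of the total influence of the counterexample QTF `f_n` to the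
Gotsman–Linial bound `I_GL(n,2) = n · 2^{1-n} · C(n,(n-1)/2)` equals
`1 + 7/(32n) - 3/(32(n-2)) + 3/(16n²)`. -/
theorem counterexample_influence_ratio {n : ℕ} (hodd : Odd n) (hn : 9 ≤ n)
    (f : (Fin n → ℤ) → ℤ)
    (hf : ∀ x ∈ cube (Fin n), f x = sgn (argGL (by omega) x)) :
    totalInf f / ((n : ℝ) * 2 * (n.choose ((n - 1) / 2) : ℝ) / 2 ^ n) =
      1 + 7 / (32 * (n : ℝ)) - 3 / (32 * ((n : ℝ) - 2)) + 3 / (16 * (n : ℝ) ^ 2) := by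
  obtain ⟨m, rfl⟩ : ∃ m, n = 2 * m + 9 := by
    obtain ⟨r, rfl⟩ := hodd
    exact ⟨r - 4, by omega⟩
  have hI := totalInf_sgn_argGL_mul_two_pow (n := 2 * m + 9) (by omega)
  rw [Fintype.card_fin, show 2 * m + 9 - 3 = 2 * m + 6 by omega, sum_choose_mul_flipCount] at hI
  rw [totalInf_congr hf, show (2 * m + 9 - 1) / 2 = m + 4 by omega]
  push_cast
  rw [← window_sum_div_bound_eq m, ← hI]
  field_simp
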